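/- Let l, m be natural numbers with m ≤ l, m ≡ 2 (mod 4) and l ≡ 5 (mod 8). Then H_l^m(−2) ≡ 0 (mod 8). -/

import Mathlib

/-- The coefficient `σ_l^m(k)` of the Holt–Ille polynomial `H_l^m`. -/
def sigmaLM (l m k : ℕ) : ℚ :=
  if (l + m) % 2 = 0 then
    (-2 : ℚ) ^ k * (((l - m) / 2).choose k : ℚ) * (((l + m) / 2).choose k : ℚ) /
      (((2 * k).choose k : ℚ))
  else
    (-2 : ℚ) ^ k * (((l - m) / 2).choose k : ℚ) * (((l + m) / 2).choose k : ℚ) /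
      ((((2 * k).choose k : ℚ)) * (2 * (k : ℚ) + 1))

/-- The value `H_l^m(−2) = Σ_{k=0}^{⌊(l−m)/2⌋} σ_l^m(k)`. -/
def HLM (l m : ℕ) : ℚ := ∑ k ∈ Finset.range ((l - m) / 2 + 1), sigmaLM l m k

/-- `a ≡ b (mod 2^N)` for rationals (with odd denominators), expressed via the 2-adic
norm on `ℚ₂`: it means `‖a − b‖₂ ≤ 2^(−N)`. -/
def Cong2 (a b : ℚ) (N : ℕ) : Prop :=
  ‖((a - b : ℚ) : ℚ_[2])‖ ≤ (2 : ℝ) ^ (-(N : ℤ))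

/-!
For `l + m` odd put `a = (l - m) / 2`, `b = (l + m) / 2`. The identity
`k! · C(2k, k) · (2k + 1) = 2^k · (2k + 1)‼` turns `σ_l^m(k)` into
`(-1)^k · k! · C(a, k) · C(b, k) / (2k + 1)‼`, whose denominator is odd, so every term with
`k ≥ 4` is divisible by `8` through `k!`. Writing `a = 2x + 1`, `b = 2y + 1`, the first four terms
times `945` form an integer polynomial in `x, y`, which vanishes mod `8` as soon as
`x + y ≡ 1 (mod 4)`; that is what `m ≡ 2 (mod 4)` and `l ≡ 5 (mod 8)` give.
-/

open Nat Finset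

lemma Nat.odd_doubleFactorial_two_mul_add_one : ∀ k : ℕ, Odd (2 * k + 1)‼
  | 0 => odd_one
  | k + 1 => by
    rw [show 2 * (k + 1) + 1 = 2 * k + 1 + 2 by ring, doubleFactorial_add_two]
    exact (odd_two_mul_add_one (k + 1)).mul (odd_doubleFactorial_two_mul_add_one k)

lemma Nat.factorial_mul_centralBinom_mul_eq (k : ℕ) :
    k ! * centralBinom k * (2 * k + 1) = 2 ^ k * (2 * k + 1)‼ := by
  have hchoose : centralBinom k * k ! * k ! = (2 * k)! := by
    simpa [centralBinom_eq_two_mul_choose, show 2 * k - k = k by omega] using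
      choose_mul_factorial_mul_factorial (show k ≤ 2 * k by omega)
  apply Nat.eq_of_mul_eq_mul_right (factorial_pos k)
  calc k ! * centralBinom k * (2 * k + 1) * k !
      = (2 * k + 1) * (centralBinom k * k ! * k !) := by ring
    _ = (2 * k + 1)‼ * (2 * k)‼ := by
      rw [hchoose, ← factorial_succ, factorial_eq_mul_doubleFactorial]
    _ = 2 ^ k * (2 * k + 1)‼ * k ! := by rw [doubleFactorial_two_mul]; ring

lemma Padic.norm_le_zpow_of_mul_natCast_eq {p : ℕ} [Fact p.Prime] {q : ℚ} {d n : ℕ} {c : ℤ}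
    (hd : p.Coprime d) (h : q * d = p ^ n * c) : ‖(q : ℚ_[p])‖ ≤ (p : ℝ) ^ (-n : ℤ) := by
  have hnorm : ‖(q : ℚ_[p])‖ = ‖((p ^ n * c : ℤ) : ℚ_[p])‖ := by
    rw [← mul_one ‖(q : ℚ_[p])‖, ← norm_natCast_eq_one_iff.mpr hd, ← norm_mul]
    exact_mod_cast congrArg (fun r : ℚ => ‖(r : ℚ_[p])‖) h
  rw [hnorm, norm_int_le_pow_iff_dvd]
  exact dvd_mul_right _ _

def sigmaOdd (a b k : ℕ) : ℚ := (-1) ^ k * k ! * a.choose k * b.choose k / (2 * k + 1)‼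

lemma sigmaLM_eq_sigmaOdd {l m : ℕ} (h : (l + m) % 2 = 1) (k : ℕ) :
    sigmaLM l m k = sigmaOdd ((l - m) / 2) ((l + m) / 2) k := by
  have hid : (k ! : ℚ) * (2 * k).choose k * (2 * k + 1) = 2 ^ k * (2 * k + 1)‼ := by
    exact_mod_cast centralBinom_eq_two_mul_choose k ▸ factorial_mul_centralBinom_mul_eq k
  have hC : ((2 * k).choose k : ℚ) ≠ 0 := by
    exact_mod_cast (choose_pos (show k ≤ 2 * k by omega)).ne'
  have hD : ((2 * k + 1)‼ : ℚ) ≠ 0 := by positivity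
  rw [sigmaLM, if_neg (by omega), sigmaOdd, div_eq_div_iff (mul_ne_zero hC (by positivity)) hD,
    neg_eq_neg_one_mul (2 : ℚ), mul_pow]
  linear_combination -(-1) ^ k * (((l - m) / 2).choose k : ℚ) * ((l + m) / 2).choose k * hid

def headPoly {R : Type*} [CommRing R] (x y : R) : R :=
  945 - 315 * ((2 * x + 1) * (2 * y + 1)) + 126 * (x * (2 * x + 1) * (y * (2 * y + 1)))
    - 6 * (x * (2 * x + 1) * (2 * x - 1) * (y * (2 * y + 1) * (2 * y - 1)))

lemma map_headPoly {R S : Type*} [CommRing R] [CommRing S] (f : R →+* S) (x y : R) :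
    f (headPoly x y) = headPoly (f x) (f y) := by
  simp [headPoly, map_ofNat]

lemma headPoly_eq_zero_of_add_eq (x y w : ZMod 8) (h : x + y = 4 * w + 1) : headPoly x y = 0 := by
  revert x y w; decide

lemma sum_range_four_sigmaOdd (x y : ℕ) :
    945 * ∑ k ∈ range 4, sigmaOdd (2 * x + 1) (2 * y + 1) k = headPoly (x : ℚ) y := by
  simp [sum_range_succ, sigmaOdd, cast_choose_eq_descPochhammer_div, descPochhammer_succ_right,
    factorial, headPoly]
  ring

lemma eight_dvd_headPoly {x y : ℕ} (h : (x + y) % 4 = 1) : (8 : ℤ) ∣ headPoly (x : ℤ) y := by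
  have hzmod : ((x + y : ℕ) : ZMod 8) = 4 * (((x + y) / 4 : ℕ) : ZMod 8) + 1 := by
    exact_mod_cast congrArg (Nat.cast : ℕ → ZMod 8) (show x + y = 4 * ((x + y) / 4) + 1 by omega)
  refine (ZMod.intCast_zmod_eq_zero_iff_dvd _ 8).mp ?_
  rw [← eq_intCast (Int.castRingHom (ZMod 8)), map_headPoly]
  push_cast at hzmod ⊢
  exact headPoly_eq_zero_of_add_eq _ _ _ hzmod

lemma norm_sum_range_four_sigmaOdd_le {x y : ℕ} (h : (x + y) % 4 = 1) :
    ‖((∑ k ∈ range 4, sigmaOdd (2 * x + 1) (2 * y + 1) k : ℚ) : ℚ_[2])‖ ≤ (2 : ℝ) ^ (-3 : ℤ) := by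
  obtain ⟨c, hc⟩ := eight_dvd_headPoly h
  refine Padic.norm_le_zpow_of_mul_natCast_eq (d := 945) (c := c) (by norm_num) ?_
  push_cast
  rw [mul_comm, sum_range_four_sigmaOdd]
  have := congrArg (Int.cast : ℤ → ℚ) hc
  push_cast [headPoly] at this ⊢
  linear_combination this

lemma norm_sigmaOdd_le_of_four_le (a b : ℕ) {k : ℕ} (hk : 4 ≤ k) :
    ‖(sigmaOdd a b k : ℚ_[2])‖ ≤ (2 : ℝ) ^ (-3 : ℤ) := by
  obtain ⟨c, hc⟩ : 8 ∣ k ! := (show 8 ∣ (4 : ℕ)! by decide).trans (factorial_dvd_factorial hk)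
  refine Padic.norm_le_zpow_of_mul_natCast_eq (d := (2 * k + 1)‼)
    (c := (-1) ^ k * c * a.choose k * b.choose k)
    (coprime_two_left.mpr (odd_doubleFactorial_two_mul_add_one k)) ?_
  have hD : ((2 * k + 1)‼ : ℚ) ≠ 0 := by positivity
  rw [sigmaOdd, div_mul_cancel₀ _ hD, hc]
  push_cast
  ring

lemma sum_range_sigmaOdd_eq_of_lt (a b : ℕ) {N : ℕ} (h : a < N) :
    ∑ k ∈ range (a + 1), sigmaOdd a b k = ∑ k ∈ range N, sigmaOdd a b k := by
  refine sum_subset (range_subset_range.mpr h) fun k _ hk => ?_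
  rw [sigmaOdd, choose_eq_zero_of_lt (by simpa using hk)]
  simp

lemma norm_sum_sigmaOdd_le {x y : ℕ} (h : (x + y) % 4 = 1) :
    ‖((∑ k ∈ range (2 * x + 1 + 1), sigmaOdd (2 * x + 1) (2 * y + 1) k : ℚ) : ℚ_[2])‖
      ≤ (2 : ℝ) ^ (-3 : ℤ) := by
  rw [sum_range_sigmaOdd_eq_of_lt _ _ (show 2 * x + 1 < 4 + (2 * x + 1) by omega),
    sum_range_add, Rat.cast_add]
  refine (Padic.nonarchimedean _ _).trans (max_le (norm_sum_range_four_sigmaOdd_le h) ?_)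
  rw [Rat.cast_sum]
  exact IsUltrametricDist.norm_sum_le_of_forall_le_of_nonneg (by positivity)
    fun i _ => norm_sigmaOdd_le_of_four_le _ _ (by omega)

theorem HLM_cong_zero_of_l_mod_eight' (l m : ℕ) (hml : m ≤ l) (hm : m % 4 = 2)
    (hl : l % 8 = 5) : Cong2 (HLM l m) 0 3 := by
  have hodd : (l + m) % 2 = 1 := by omega
  obtain ⟨x, hx⟩ : ∃ x, (l - m) / 2 = 2 * x + 1 := ⟨((l - m) / 2 - 1) / 2, by omega⟩
  obtain ⟨y, hy⟩ : ∃ y, (l + m) / 2 = 2 * y + 1 := ⟨((l + m) / 2 - 1) / 2, by omega⟩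
  -- `a + b = l - 1`, so `x + y = (l - 3) / 2`
  have hxy : (x + y) % 4 = 1 := by omega
  rw [Cong2, sub_zero, HLM, sum_congr rfl fun k _ => sigmaLM_eq_sigmaOdd hodd k, hx, hy]
  exact_mod_cast norm_sum_sigmaOdd_le hxy
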